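/- Let G_f be a graph, k a positive integer, H the set of vertices of degree at least k+1, L the set of vertices not in H all of whose neighbors lie in H, and R the remaining vertices. If G_f admits a vertex cover of size at most k, then the induced subgraph G_f[R] has at most k^2 edges. -/

import Mathlib

theorem stmt_2 {V : Type*} [Fintype V] [DecidableEq V]
    (G : SimpleGraph V) [DecidableRel G.Adj] (k : ℕ) (hk : 0 < k)
    (H L R : Finset V)
    (hH : H = Finset.univ.filter (fun v => k + 1 ≤ G.degree v))
    (hL : L = Finset.univ.filter (fun v => v ∉ H ∧ ∀ u, G.Adj v u → u ∈ H))
    (hR : R = Finset.univ \ (H ∪ L))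
    (S : Finset V)
    (hS : ∀ u v, G.Adj u v → u ∈ S ∨ v ∈ S)
    (hSk : S.card ≤ k) :
    (G.edgeFinset.filter (fun e => ∀ v ∈ e, v ∈ R)).card ≤ k ^ 2 := by
  classical
  set T := S ∩ R with hT
  -- degree bound for vertices in R
  have hdegR : ∀ v ∈ R, G.degree v ≤ k := by
    intro v hv
    by_contra h
    push_neg at h
    have hvH : v ∈ H := by
      rw [hH]; simp [Nat.succ_le_of_lt h, h]
    rw [hR] at hv
    simp at hv
    exact hv.1 hvH
  -- filtered edges are covered by incidence sets of T
  have hsub : G.edgeFinset.filter (fun e => ∀ v ∈ e, v ∈ R) ⊆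
      T.biUnion (fun v => G.incidenceFinset v) := by
    intro e he
    simp only [Finset.mem_filter] at he
    obtain ⟨heE, heR⟩ := he
    induction e with
    | h a b =>
      have hab : G.Adj a b := by
        rwa [SimpleGraph.mem_edgeFinset, SimpleGraph.mem_edgeSet] at heE
      have haR : a ∈ R := heR a (Sym2.mem_mk_left a b)
      have hbR : b ∈ R := heR b (Sym2.mem_mk_right a b)
      rcases hS a b hab with h | h
      · refine Finset.mem_biUnion.2 ⟨a, Finset.mem_inter.2 ⟨h, haR⟩, ?_⟩
        rw [SimpleGraph.mem_incidenceFinset]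
        exact ⟨(SimpleGraph.mem_edgeSet G).2 hab, Sym2.mem_mk_left a b⟩
      · refine Finset.mem_biUnion.2 ⟨b, Finset.mem_inter.2 ⟨h, hbR⟩, ?_⟩
        rw [SimpleGraph.mem_incidenceFinset]
        exact ⟨(SimpleGraph.mem_edgeSet G).2 hab, Sym2.mem_mk_right a b⟩
  calc (G.edgeFinset.filter (fun e => ∀ v ∈ e, v ∈ R)).card
      ≤ (T.biUnion (fun v => G.incidenceFinset v)).card := Finset.card_le_card hsub
    _ ≤ ∑ v ∈ T, (G.incidenceFinset v).card := Finset.card_biUnion_le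
    _ = ∑ v ∈ T, G.degree v := by
        refine Finset.sum_congr rfl fun v _ => ?_
        exact G.card_incidenceFinset_eq_degree v
    _ ≤ ∑ v ∈ T, k := by
        refine Finset.sum_le_sum fun v hv => ?_
        exact hdegR v (Finset.mem_inter.1 hv).2
    _ = T.card * k := by rw [Finset.sum_const, smul_eq_mul]
    _ ≤ k * k := by
        have : T.card ≤ k := le_trans (Finset.card_le_card (Finset.inter_subset_left)) hSk
        exact Nat.mul_le_mul_right k this
    _ = k ^ 2 := (sq k).symm
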